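/- arXiv:1502.05282 — 6 statements merged into one kernel-verified Lean document; each statement's English description precedes it below -/
import Mathlib

section
/- Let n ≥ 1 and i ∈ Fin n. Let B, C, D be types, ∂_j : B → C (j ∈ Fin n) and ∂′_k : C → D (k ∈ Fin (n−1)) be functions satisfying the simplicial identities ∂′_k ∘ ∂_j = ∂′_{j−1} ∘ ∂_k for all k < j (k ∈ Fin (n−1), j ∈ Fin n). Define the cycle sets Δ_n = {x : Fin (n+1) → B | ∂_k(x_j) = ∂_{j−1}(x_k) for all 0 ≤ k < j ≤ n} and Δ_{n−1} = {y : Fin n → C | ∂′_k(y_j) = ∂′_{j−1}(y_k) for all 0 ≤ k < j ≤ n−1}, and the horn set Λ^i = {x : {j ∈ Fin (n+1) | j ≠ i} → B | ∂_k(x_j) = ∂_{j−1}(x_k) for all k < j with k ≠ i and j ≠ i}. Then: (1) the map r : Λ^i → C^n given by r(x)_j = ∂_{i−1}(x_j) for j < i and r(x)_j = ∂_i(x_{j+1}) for i ≤ j ≤ n−1 takes values in Δ_{n−1}; (2) the map s : B → C^n, s(b)_j = ∂_j(b), takes values in Δ_{n−1}; (3) the square with top the forgetful map Δ_n → Λ^i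 (omitting the i-th entry), left the i-th projection Δ_n → B, right r, and bottom s, commutes and is a pullback, i.e. the map Δ_n → {(x, b) ∈ Λ^i × B | r(x) = s(b)} sending a cycle to (its i-th-entry-omitted tuple, its i-th entry) is a bijection. -/
/-- The set of `n`-cycles for faces `face i : B → C`, `i ∈ Fin n`:
tuples `x : Fin (n+1) → B` with `face k (x j) = face (j-1) (x k)` for `k < j`. -/
def cycles {n : ℕ} {B C : Type*} (face : Fin n → B → C) :
    Set (Fin (n + 1) → B) :=
  {x | ∀ k j : Fin (n + 1), (h : k.val < j.val) →
    face ⟨k.val, by have := j.isLt; omega⟩ (x j) =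
      face ⟨j.val - 1, by have := j.isLt; omega⟩ (x k)}

/-- The set of `(n-1)`-cycles: tuples `y : Fin n → C` with
`face' k (y j) = face' (j-1) (y k)` for `k < j`. -/
def lowerCycles (n : ℕ) {C D : Type*} (face' : Fin (n - 1) → C → D) :
    Set (Fin n → C) :=
  {y | ∀ k j : Fin n, (h : k.val < j.val) →
    face' ⟨k.val, by have := j.isLt; omega⟩ (y j) =
      face' ⟨j.val - 1, by have := j.isLt; omega⟩ (y k)}

/-- The set of `(n,i)`-horns: tuples indexed by `j ≠ i` satisfying the cycle
conditions whenever both indices differ from `i`. -/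
def horn {n : ℕ} {B C : Type*} (face : Fin n → B → C) (i : Fin n) :
    Set ({j : Fin (n + 1) // j ≠ i.castSucc} → B) :=
  {x | ∀ k j : {j : Fin (n + 1) // j ≠ i.castSucc}, (h : k.1.val < j.1.val) →
    face ⟨k.1.val, by have := j.1.isLt; omega⟩ (x j) =
      face ⟨j.1.val - 1, by have := j.1.isLt; omega⟩ (x k)}

/-- The map `r` from horns to `(n-1)`-tuples: `r(x)_j = face (i-1) (x j)` for `j < i`
and `r(x)_j = face i (x (j+1))` for `i ≤ j`. -/
def hornToLower {n : ℕ} {B C : Type*} (face : Fin n → B → C) (i : Fin n)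
    (x : {j : Fin (n + 1) // j ≠ i.castSucc} → B) : Fin n → C :=
  fun j =>
    if h : j.val < i.val then
      face ⟨i.val - 1, by have := i.isLt; omega⟩
        (x ⟨j.castSucc, by
          simp only [ne_eq, Fin.castSucc_inj]
          exact Fin.ne_of_lt h⟩)
    else
      face i
        (x ⟨j.succ, by
          intro hEq
          have hv := congrArg Fin.val hEq
          simp only [Fin.val_succ, Fin.coe_castSucc] at hv
          omega⟩)

/-!
A tuple `x : Fin (n + 1) → B` is determined by its restriction to the indices `j ≠ i` and its
entry `x i`. The cycle conditions on pairs of indices avoiding `i` are the horn conditions on the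
restriction, and those on pairs involving `i` say exactly that `r` of the restriction is
`(∂_j (x i))_j`; hence the square is a pullback. That `r` and `b ↦ (∂_j b)_j` land in
`(n - 1)`-cycles is a direct computation with the simplicial identities.
-/

section

variable {n : ℕ} {B C D : Type*} (face : Fin n → B → C) (i : Fin n)

section HornToLower

variable {face i} {x : {j : Fin (n + 1) // j ≠ i.castSucc} → B} {j : Fin n}

theorem hornToLower_of_lt (h : j < i) :
    hornToLower face i x j =
      face ⟨i.val - 1, by omega⟩ (x ⟨j.castSucc, (Fin.castSucc_lt_castSucc_iff.2 h).ne⟩) :=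
  dif_pos h

theorem hornToLower_of_le (h : i ≤ j) :
    hornToLower face i x j = face i (x ⟨j.succ, (Fin.castSucc_lt_succ_iff.2 h).ne'⟩) :=
  dif_neg (not_lt.2 h)

end HornToLower

theorem hornToLower_restrict_eq_iff (x : Fin (n + 1) → B) :
    hornToLower face i (fun j => x j.1) = (fun j => face j (x i.castSucc)) ↔
      ∀ k j : Fin (n + 1), (h : k.val < j.val) → (k = i.castSucc ∨ j = i.castSucc) →
        face ⟨k.val, by omega⟩ (x j) = face ⟨j.val - 1, by omega⟩ (x k) := by
  constructor
  · rintro hr k j h (rfl | rfl)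
    · obtain ⟨j, rfl⟩ := Fin.exists_succ_eq.2 (Fin.ne_zero_of_lt h)
      exact (hornToLower_of_le (Nat.lt_succ_iff.1 h)).symm.trans (congrFun hr j)
    · obtain ⟨k, rfl⟩ := Fin.exists_castSucc_eq.2 (Fin.ne_last_of_lt h)
      exact ((hornToLower_of_lt (Fin.castSucc_lt_castSucc_iff.1 h)).symm.trans
        (congrFun hr k)).symm
  · intro h
    funext j
    rcases lt_or_ge j i with hji | hij
    · rw [hornToLower_of_lt hji]
      exact (h j.castSucc i.castSucc hji (Or.inr rfl)).symm
    · rw [hornToLower_of_le hij]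
      exact h i.castSucc j.succ (Nat.lt_succ_of_le hij) (Or.inl rfl)

theorem mem_cycles_iff_horn (x : Fin (n + 1) → B) :
    x ∈ cycles face ↔ (fun j : {j // j ≠ i.castSucc} => x j.1) ∈ horn face i ∧
      hornToLower face i (fun j => x j.1) = fun j => face j (x i.castSucc) := by
  rw [hornToLower_restrict_eq_iff]
  constructor
  · exact fun hx => ⟨fun k j h => hx k j h, fun k j h _ => hx k j h⟩
  · rintro ⟨hhorn, hi⟩ k j h
    by_cases hki : k = i.castSucc ∨ j = i.castSucc
    · exact hi k j h hki
    · obtain ⟨hk, hj⟩ := not_or.1 hki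
      exact hhorn ⟨k, hk⟩ ⟨j, hj⟩ h

theorem bijOn_cycles_horn : Set.BijOn
      (fun x : Fin (n + 1) → B =>
        ((fun j : {j : Fin (n + 1) // j ≠ i.castSucc} => x j.1, x i.castSucc) :
          ({j : Fin (n + 1) // j ≠ i.castSucc} → B) × B))
      (cycles face)
      {p : ({j : Fin (n + 1) // j ≠ i.castSucc} → B) × B |
        p.1 ∈ horn face i ∧ hornToLower face i p.1 = fun j : Fin n => face j p.2} :=
  ((Equiv.funSplitAt i.castSucc B).trans (Equiv.prodComm _ _)).bijOn
    fun x => (mem_cycles_iff_horn face i x).symm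

def SimplicialIdentities (face : Fin n → B → C) (face' : Fin (n - 1) → C → D) : Prop :=
  ∀ (k : Fin (n - 1)) (j : Fin n), (h : k.val < j.val) → ∀ b : B,
    face' k (face j b) =
      face' ⟨j.val - 1, Nat.sub_lt_sub_right (Nat.one_le_of_lt h) j.isLt⟩
        (face (k.castLE (n.sub_le 1)) b)

variable {face} {face' : Fin (n - 1) → C → D}

theorem face_mem_lowerCycles (hsimp : SimplicialIdentities face face') (b : B) :
    (fun j : Fin n => face j b) ∈ lowerCycles n face' :=
  fun k j h => hsimp ⟨k.val, by omega⟩ j h b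

theorem hornToLower_mem_lowerCycles (hsimp : SimplicialIdentities face face')
    {x : {j : Fin (n + 1) // j ≠ i.castSucc} → B} (hx : x ∈ horn face i) :
    hornToLower face i x ∈ lowerCycles n face' := by
  intro k j hkj
  have := i.isLt
  rcases lt_or_ge j i with hji | hij
  · have hki : k < i := lt_trans hkj hji
    rw [hornToLower_of_lt hji, hornToLower_of_lt hki]
    calc face' ⟨k, _⟩ (face ⟨i - 1, _⟩ (x ⟨j.castSucc, _⟩))
        = face' ⟨i - 1 - 1, by omega⟩ (face ⟨k, by omega⟩ (x ⟨j.castSucc, _⟩)) :=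
          hsimp ⟨k, by omega⟩ ⟨i - 1, _⟩ (show k.val < i.val - 1 by omega) _
      _ = face' ⟨i - 1 - 1, by omega⟩ (face ⟨j - 1, by omega⟩ (x ⟨k.castSucc, _⟩)) :=
          congrArg _ (hx ⟨k.castSucc, _⟩ ⟨j.castSucc, _⟩ hkj)
      _ = face' ⟨j - 1, _⟩ (face ⟨i - 1, _⟩ (x ⟨k.castSucc, _⟩)) :=
          (hsimp ⟨j - 1, by omega⟩ ⟨i - 1, _⟩ (show j.val - 1 < i.val - 1 by omega) _).symm
  rcases lt_or_ge k i with hki | hik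
  · rw [hornToLower_of_le hij, hornToLower_of_lt hki]
    calc face' ⟨k, _⟩ (face i (x ⟨j.succ, _⟩))
        = face' ⟨i - 1, by omega⟩ (face ⟨k, by omega⟩ (x ⟨j.succ, _⟩)) :=
          hsimp ⟨k, by omega⟩ i hki _
      _ = face' ⟨i - 1, by omega⟩ (face j (x ⟨k.castSucc, _⟩)) :=
          congrArg _ (hx ⟨k.castSucc, _⟩ ⟨j.succ, _⟩ (Nat.lt_succ_of_lt hkj))
      _ = face' ⟨j - 1, _⟩ (face ⟨i - 1, _⟩ (x ⟨k.castSucc, _⟩)) :=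
          hsimp ⟨i - 1, by omega⟩ j (show i.val - 1 < j.val by omega) _
  · rw [hornToLower_of_le hij, hornToLower_of_le hik]
    calc face' ⟨k, _⟩ (face i (x ⟨j.succ, _⟩))
        = face' ⟨i, by omega⟩ (face ⟨k + 1, by omega⟩ (x ⟨j.succ, _⟩)) :=
          (hsimp ⟨i, by omega⟩ ⟨k + 1, by omega⟩ (Nat.lt_succ_of_le hik) _).symm
      _ = face' ⟨i, by omega⟩ (face j (x ⟨k.succ, _⟩)) :=
          congrArg _ (hx ⟨k.succ, _⟩ ⟨j.succ, _⟩ (Nat.succ_lt_succ hkj))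
      _ = face' ⟨j - 1, _⟩ (face i (x ⟨k.succ, _⟩)) :=
          hsimp ⟨i, by omega⟩ j (lt_of_le_of_lt hik hkj) _

end

/-- The square relating `n`-cycles, `(n,i)`-horns, `B` and `(n-1)`-cycles is a
pullback (Set-level form of the paper's Lemma on Δ and Λ). -/
theorem cycles_horn_pullback {n : ℕ} {B C D : Type*}
    (face : Fin n → B → C) (face' : Fin (n - 1) → C → D) (i : Fin n)
    (hsimp : ∀ (k : Fin (n - 1)) (j : Fin n), (h : k.val < j.val) → ∀ b : B,
      face' k (face j b) =
        face' ⟨j.val - 1, by have := j.isLt; omega⟩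
          (face ⟨k.val, by have := k.isLt; omega⟩ b)) :
    (∀ x ∈ horn face i, hornToLower face i x ∈ lowerCycles n face') ∧
    (∀ b : B, (fun j : Fin n => face j b) ∈ lowerCycles n face') ∧
    Set.BijOn
      (fun x : Fin (n + 1) → B =>
        ((fun j : {j : Fin (n + 1) // j ≠ i.castSucc} => x j.1, x i.castSucc) :
          ({j : Fin (n + 1) // j ≠ i.castSucc} → B) × B))
      (cycles face)
      {p : ({j : Fin (n + 1) // j ≠ i.castSucc} → B) × B |
        p.1 ∈ horn face i ∧ hornToLower face i p.1 = fun j : Fin n => face j p.2} :=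
  ⟨fun _ => hornToLower_mem_lowerCycles i hsimp, face_mem_lowerCycles hsimp,
    bijOn_cycles_horn face i⟩
end

section
/- Let 𝒜 be an abelian category. Consider objects A₁, A₀, B₁, B₀ and morphisms a : A₁ → A₀, b : B₁ → B₀, f₁ : A₁ → B₁, f₀ : A₀ → B₀ together with sections ā : A₀ → A₁ (a ∘ ā = 1), b̄ : B₀ → B₁ (b ∘ b̄ = 1), f̄₁ : B₁ → A₁ (f₁ ∘ f̄₁ = 1), f̄₀ : B₀ → A₀ (f₀ ∘ f̄₀ = 1), such that all squares commute: b ∘ f₁ = f₀ ∘ a, f₁ ∘ ā = b̄ ∘ f₀, a ∘ f̄₁ = f̄₀ ∘ b, and ā ∘ f̄₀ = f̄₁ ∘ b̄. Let P = A₀ ×_{B₀} B₁ be the pullback of f₀ and b, with projections π₀, π₁, and let ⟨a, f₁⟩ : A₁ → P be the comparison morphism. Then there is exactly one morphism ν : P → A₁ satisfying ν ∘ ⟨1_{A₀}, b̄ ∘ f₀⟩ = ā and ν ∘ ⟨f̄₀ ∘ b, 1_{B₁}⟩ = f̄₁, and this ν satisfies ⟨a, f₁⟩ ∘ ν = 1_P;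 in particular ⟨a, f₁⟩ is a split epimorphism. -/
/-!
If `g` has a section `s` and `f` a section `t`, the pullback `P` of `f` and `g` is covered by
the sections `inl = ⟨1, f ≫ s⟩` and `inr = ⟨g ≫ t, 1⟩` of its projections: additively,
`𝟙 P = fst ≫ inl + (snd - snd ≫ g ≫ s) ≫ inr`. Hence a morphism out of `P` is determined by
its restrictions along `inl` and `inr`, and any pair agreeing on `Z` (where
`t ≫ inl = s ≫ inr`) extends.
For a double split epimorphism, `ā` and `f̄₁` agree on `B₀` since `f̄₀ ≫ ā = b̄ ≫ f̄₁`, and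
their extension `ν` splits `⟨a, f₁⟩` because `ν ≫ ⟨a, f₁⟩` restricts to `inl` and `inr` again.
-/

open CategoryTheory CategoryTheory.Limits

namespace CategoryTheory.Limits.pullback

variable {C : Type*} [Category C] {X Y Z : C} {f : X ⟶ Z} {g : Y ⟶ Z} [HasPullback f g]
  {s : Z ⟶ Y} {t : Z ⟶ X}

noncomputable abbrev inlOfSection (hs : s ≫ g = 𝟙 Z) : X ⟶ pullback f g :=
  pullback.lift (𝟙 X) (f ≫ s) (by rw [Category.id_comp, Category.assoc, hs, Category.comp_id])

noncomputable abbrev inrOfSection (ht : t ≫ f = 𝟙 Z) : Y ⟶ pullback f g :=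
  pullback.lift (g ≫ t) (𝟙 Y) (by rw [Category.assoc, ht, Category.comp_id, Category.id_comp])

variable [Preadditive C]

theorem id_eq_fst_inlOfSection_add (hs : s ≫ g = 𝟙 Z) (ht : t ≫ f = 𝟙 Z) :
    𝟙 (pullback f g) =
      pullback.fst f g ≫ inlOfSection hs +
        (pullback.snd f g - pullback.snd f g ≫ g ≫ s) ≫ inrOfSection ht := by
  apply pullback.hom_ext
  · simp only [Category.id_comp, Preadditive.add_comp, Preadditive.sub_comp, Category.assoc,
      pullback.lift_fst, Category.comp_id, reassoc_of% hs, sub_self, add_zero]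
  · simp only [Category.id_comp, Preadditive.add_comp, Preadditive.sub_comp, Category.assoc,
      pullback.lift_snd, Category.comp_id, pullback.condition_assoc, add_sub_cancel]

theorem hom_ext_of_sections (hs : s ≫ g = 𝟙 Z) (ht : t ≫ f = 𝟙 Z) {W : C}
    {φ ψ : pullback f g ⟶ W} (h₀ : inlOfSection hs ≫ φ = inlOfSection hs ≫ ψ)
    (h₁ : inrOfSection ht ≫ φ = inrOfSection ht ≫ ψ) : φ = ψ := by
  rw [← Category.id_comp φ, ← Category.id_comp ψ, id_eq_fst_inlOfSection_add hs ht]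
  simp only [Preadditive.add_comp, Category.assoc, h₀, h₁]

noncomputable def descOfSections (f : X ⟶ Z) (g : Y ⟶ Z) [HasPullback f g] (s : Z ⟶ Y) {W : C}
    (h₀ : X ⟶ W) (h₁ : Y ⟶ W) : pullback f g ⟶ W :=
  pullback.fst f g ≫ h₀ + (pullback.snd f g - pullback.snd f g ≫ g ≫ s) ≫ h₁

theorem inlOfSection_descOfSections (hs : s ≫ g = 𝟙 Z) {W : C} (h₀ : X ⟶ W) (h₁ : Y ⟶ W) :
    inlOfSection hs ≫ descOfSections f g s h₀ h₁ = h₀ := by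
  simp only [descOfSections, Preadditive.comp_add, Preadditive.sub_comp, Preadditive.comp_sub,
    pullback.lift_fst_assoc, pullback.lift_snd_assoc, Category.id_comp, Category.assoc,
    reassoc_of% hs, sub_self, add_zero]

theorem inrOfSection_descOfSections (ht : t ≫ f = 𝟙 Z) {W : C} {h₀ : X ⟶ W} {h₁ : Y ⟶ W}
    (h : t ≫ h₀ = s ≫ h₁) : inrOfSection ht ≫ descOfSections f g s h₀ h₁ = h₁ := by
  simp only [descOfSections, Preadditive.comp_add, Preadditive.sub_comp, Preadditive.comp_sub,
    pullback.lift_fst_assoc, pullback.lift_snd_assoc, Category.id_comp, Category.assoc,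
    h, add_sub_cancel]

end CategoryTheory.Limits.pullback

/-- In an abelian category, given a double split epimorphism, the comparison
morphism `⟨a, f₁⟩` to the pullback of `f₀` and `b` is a split epimorphism,
with a unique splitting `ν` compatible with the given sections. -/
theorem doubleSplitEpi_comparison_splitEpi
    {𝒜 : Type*} [Category 𝒜] [Abelian 𝒜] {A₁ A₀ B₁ B₀ : 𝒜}
    (a : A₁ ⟶ A₀) (b : B₁ ⟶ B₀) (f₁ : A₁ ⟶ B₁) (f₀ : A₀ ⟶ B₀)
    (abar : A₀ ⟶ A₁) (bbar : B₀ ⟶ B₁) (f₁bar : B₁ ⟶ A₁) (f₀bar : B₀ ⟶ A₀)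
    (ha : abar ≫ a = 𝟙 A₀) (hb : bbar ≫ b = 𝟙 B₀)
    (hf₁ : f₁bar ≫ f₁ = 𝟙 B₁) (hf₀ : f₀bar ≫ f₀ = 𝟙 B₀)
    (sq : f₁ ≫ b = a ≫ f₀)
    (sqbar₁ : abar ≫ f₁ = f₀ ≫ bbar)
    (sqbar₂ : f₁bar ≫ a = b ≫ f₀bar)
    (sqbar₃ : f₀bar ≫ abar = bbar ≫ f₁bar) :
    ∃ ν : pullback f₀ b ⟶ A₁,
      (pullback.lift (𝟙 A₀) (f₀ ≫ bbar)
          (by rw [Category.id_comp, Category.assoc, hb, Category.comp_id]) ≫ ν = abar ∧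
        pullback.lift (b ≫ f₀bar) (𝟙 B₁)
          (by rw [Category.assoc, hf₀, Category.comp_id, Category.id_comp]) ≫ ν = f₁bar ∧
        ν ≫ pullback.lift a f₁ sq.symm = 𝟙 (pullback f₀ b)) ∧
      (∀ ν' : pullback f₀ b ⟶ A₁,
        pullback.lift (𝟙 A₀) (f₀ ≫ bbar)
          (by rw [Category.id_comp, Category.assoc, hb, Category.comp_id]) ≫ ν' = abar →
        pullback.lift (b ≫ f₀bar) (𝟙 B₁)
          (by rw [Category.assoc, hf₀, Category.comp_id, Category.id_comp]) ≫ ν' = f₁bar →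
        ν' = ν) ∧
      IsSplitEpi (pullback.lift a f₁ sq.symm) := by
  let ν : pullback f₀ b ⟶ A₁ := pullback.descOfSections f₀ b bbar abar f₁bar
  have hν₀ : pullback.inlOfSection hb ≫ ν = abar :=
    pullback.inlOfSection_descOfSections hb abar f₁bar
  have hν₁ : pullback.inrOfSection hf₀ ≫ ν = f₁bar :=
    pullback.inrOfSection_descOfSections hf₀ sqbar₃
  have hsplit : ν ≫ pullback.lift a f₁ sq.symm = 𝟙 (pullback f₀ b) := by
    apply pullback.hom_ext_of_sections hb hf₀
    · rw [reassoc_of% hν₀, Category.comp_id]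
      apply pullback.hom_ext <;>
        simp only [Category.assoc, pullback.lift_fst, pullback.lift_snd, ha, sqbar₁]
    · rw [reassoc_of% hν₁, Category.comp_id]
      apply pullback.hom_ext <;>
        simp only [Category.assoc, pullback.lift_fst, pullback.lift_snd, hf₁, sqbar₂]
  refine ⟨ν, ⟨hν₀, hν₁, hsplit⟩, fun ν' h₀ h₁ => ?_, ⟨⟨ν, hsplit⟩⟩⟩
  exact pullback.hom_ext_of_sections hb hf₀ (h₀.trans hν₀.symm) (h₁.trans hν₁.symm)
end

section
/- Let f : X → Z be a surjective group homomorphism and g : Y → Z a group homomorphism admitting a section s : Z → Y with g ∘ s = id_Z (i.e. g is a split epimorphism). Let P = {(x, y) ∈ X × Y | f(x) = g(y)} be the pullback of f and g, with projections pr_X and pr_Y. Then the canonical homomorphism from the abelianization Ab(P) to the pullback {(u, v) ∈ Ab(X) × Ab(Y) | (Ab f)(u) = (Ab g)(v)}, induced by Ab(pr_X) and Ab(pr_Y), is an isomorphism of groups. Here Ab(G) = G/[G,G] and Ab h denotes the homomorphism induced on abelianizations. -/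
/-!
Injectivity: an element `p` of the pullback `P` whose two coordinates are products of
commutators is itself one in `P`. As `f` is onto, so is the projection `P → Y`, hence it maps
`[P, P]` onto `[Y, Y]`; dividing `p` by a lift `c ∈ [P, P]` of its second coordinate leaves an
element `(x, 1)` with `x ∈ [X, X] ∩ ker f`, which is the image of `x` under the homomorphism
`X → P`, `x ↦ (x, s (f x))`, and therefore lies in `[P, P]`.

Surjectivity: `[Z, Z]` is the image of `[X, X]` under `f`, so a pair `(x, y)` with
`f x ≡ g y` modulo `[Z, Z]` can be corrected to `(x * c, y) ∈ P` with `c ∈ [X, X]`.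
-/

/-- The pullback of two group homomorphisms `f : X → Z`, `g : Y → Z`,
as a subgroup of `X × Y`. -/
def pullbackSubgroup {X Y Z : Type*} [Group X] [Group Y] [Group Z]
    (f : X →* Z) (g : Y →* Z) : Subgroup (X × Y) where
  carrier := {p | f p.1 = g p.2}
  one_mem' := by simp
  mul_mem' := by
    intro p q hp hq
    simp only [Set.mem_setOf_eq, Prod.fst_mul, Prod.snd_mul, map_mul] at *
    rw [hp, hq]
  inv_mem' := by
    intro p hp
    simp only [Set.mem_setOf_eq, Prod.fst_inv, Prod.snd_inv, map_inv] at *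
    rw [hp]

open Function

section Commutator

variable {G H : Type*} [Group G] [Group H]

theorem MonoidHom.map_mem_commutator (φ : G →* H) {x : G} (hx : x ∈ commutator G) :
    φ x ∈ commutator H := by
  have hmap : φ x ∈ (commutator G).map φ := ⟨x, hx, rfl⟩
  rw [map_commutator_eq] at hmap
  exact Subgroup.commutator_mono le_top le_top hmap

theorem MonoidHom.map_commutator_of_surjective (φ : G →* H) (hφ : Surjective φ) :
    (commutator G).map φ = commutator H := by
  rw [map_commutator_eq, MonoidHom.range_eq_top.mpr hφ, _root_.commutator_def]

theorem Abelianization.of_eq_one_iff {x : G} : of x = 1 ↔ x ∈ commutator G := by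
  rw [← MonoidHom.mem_ker, ker_of]

theorem Abelianization.of_surjective : Surjective (of : G → Abelianization G) :=
  QuotientGroup.mk_surjective

end Commutator

namespace pullbackSubgroup

variable {X Y Z : Type*} [Group X] [Group Y] [Group Z] (f : X →* Z) (g : Y →* Z)

abbrev fst : pullbackSubgroup f g →* X := (MonoidHom.fst X Y).comp (pullbackSubgroup f g).subtype

abbrev snd : pullbackSubgroup f g →* Y := (MonoidHom.snd X Y).comp (pullbackSubgroup f g).subtype

variable {f g}

theorem apply_fst_eq_apply_snd (p : pullbackSubgroup f g) : f (fst f g p) = g (snd f g p) := p.2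

theorem snd_surjective (hf : Surjective f) : Surjective (snd f g) := fun y =>
  let ⟨x, hx⟩ := hf (g y)
  ⟨⟨(x, y), hx⟩, rfl⟩

def liftOfSection (s : Z →* Y) (hs : ∀ z, g (s z) = z) : X →* pullbackSubgroup f g :=
  ((MonoidHom.id X).prod (s.comp f)).codRestrict _ fun x => (hs (f x)).symm

theorem mem_commutator_of_snd_eq_one (s : Z →* Y) (hs : ∀ z, g (s z) = z)
    {p : pullbackSubgroup f g} (h₁ : fst f g p ∈ commutator X) (h₂ : snd f g p = 1) :
    p ∈ commutator (pullbackSubgroup f g) := by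
  have hp : liftOfSection s hs (fst f g p) = p := by
    have hs₁ : s (f (fst f g p)) = 1 := by rw [apply_fst_eq_apply_snd, h₂, map_one, map_one]
    ext
    · rfl
    · exact hs₁.trans h₂.symm
  exact hp ▸ (liftOfSection s hs).map_mem_commutator h₁

theorem mem_commutator_of_fst_mem_of_snd_mem (hf : Surjective f)
    (s : Z →* Y) (hs : ∀ z, g (s z) = z) {p : pullbackSubgroup f g}
    (h₁ : fst f g p ∈ commutator X) (h₂ : snd f g p ∈ commutator Y) :
    p ∈ commutator (pullbackSubgroup f g) := by
  rw [← (snd f g).map_commutator_of_surjective (snd_surjective hf)] at h₂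
  obtain ⟨c, hc, hcp⟩ := h₂
  have hpc : p * c⁻¹ ∈ commutator (pullbackSubgroup f g) := by
    refine mem_commutator_of_snd_eq_one s hs ?_ ?_
    · rw [map_mul, map_inv]
      exact mul_mem h₁ (inv_mem ((fst f g).map_mem_commutator hc))
    · rw [map_mul, map_inv, hcp, mul_inv_cancel]
  simpa using mul_mem hpc hc

theorem abelianizationMap_prod_injective (hf : Surjective f)
    (s : Z →* Y) (hs : ∀ z, g (s z) = z) :
    Injective ((Abelianization.map (fst f g)).prod (Abelianization.map (snd f g))) := by
  refine (injective_iff_map_eq_one _).mpr fun w hw => ?_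
  obtain ⟨p, rfl⟩ := Abelianization.of_surjective w
  simp only [MonoidHom.prod_apply, Abelianization.map_of, Prod.mk_eq_one,
    Abelianization.of_eq_one_iff] at hw ⊢
  exact mem_commutator_of_fst_mem_of_snd_mem hf s hs hw.1 hw.2

theorem map_map_fst_eq_map_map_snd (w : Abelianization (pullbackSubgroup f g)) :
    Abelianization.map f (Abelianization.map (fst f g) w) =
      Abelianization.map g (Abelianization.map (snd f g) w) := by
  obtain ⟨p, rfl⟩ := Abelianization.of_surjective w
  simp only [Abelianization.map_of, apply_fst_eq_apply_snd]

theorem exists_map_fst_eq_and_map_snd_eq (hf : Surjective f)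
    {u : Abelianization X} {v : Abelianization Y}
    (h : Abelianization.map f u = Abelianization.map g v) :
    ∃ w, Abelianization.map (fst f g) w = u ∧ Abelianization.map (snd f g) w = v := by
  obtain ⟨x, rfl⟩ := Abelianization.of_surjective u
  obtain ⟨y, rfl⟩ := Abelianization.of_surjective v
  rw [Abelianization.map_of, Abelianization.map_of] at h
  have hdiv : (f x)⁻¹ * g y ∈ (commutator X).map f := by
    rw [f.map_commutator_of_surjective hf, ← Abelianization.of_eq_one_iff, map_mul, map_inv, h,
      inv_mul_cancel]
  obtain ⟨c, hc, hfc⟩ := hdiv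
  have hp : (x * c, y) ∈ pullbackSubgroup f g :=
    show f (x * c) = g y by rw [map_mul, hfc, mul_inv_cancel_left]
  refine ⟨Abelianization.of ⟨(x * c, y), hp⟩, ?_, Abelianization.map_of _ _⟩
  rw [Abelianization.map_of]
  change Abelianization.of (x * c) = _
  rw [map_mul, Abelianization.of_eq_one_iff.mpr hc, mul_one]

end pullbackSubgroup

open pullbackSubgroup in
/-- Abelianization preserves the pullback of a surjection `f` along a split
epimorphism `g`: the canonical homomorphism from `Ab(X ×_Z Y)` to the pullback
of `Ab f` and `Ab g` is an isomorphism of groups. -/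
theorem abelianization_preserves_pullback_along_split_epi
    {X Y Z : Type*} [Group X] [Group Y] [Group Z]
    (f : X →* Z) (hf : Function.Surjective f)
    (g : Y →* Z) (s : Z →* Y) (hs : ∀ z : Z, g (s z) = z) :
    Set.BijOn
      (fun u : Abelianization ↥(pullbackSubgroup f g) =>
        ((Abelianization.map ((MonoidHom.fst X Y).comp (pullbackSubgroup f g).subtype) u,
          Abelianization.map ((MonoidHom.snd X Y).comp (pullbackSubgroup f g).subtype) u) :
          Abelianization X × Abelianization Y))
      Set.univ
      {q : Abelianization X × Abelianization Y |
        Abelianization.map f q.1 = Abelianization.map g q.2} := by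
  refine ⟨fun w _ => map_map_fst_eq_map_map_snd w,
    (abelianizationMap_prod_injective hf s hs).injOn, ?_⟩
  rintro ⟨u, v⟩ h
  obtain ⟨w, hu, hv⟩ := exists_map_fst_eq_and_map_snd_eq hf h
  exact ⟨w, trivial, Prod.ext hu hv⟩
end

section
/- Let X, D, C be groups and d : X → D, c : X → C group homomorphisms; set A = ker d ∩ ker c. Let □(d,c) be the subgroup of X × X × X × X consisting of all quadruples (δ, α, γ, β) with c(δ) = c(α), c(γ) = c(β), d(δ) = d(γ) and d(α) = d(β), and let ◇(d,c) be the subgroup of X × X × X consisting of all triples (α, γ, β) with c(γ) = c(β) and d(α) = d(β). Then for every (δ, α, γ, β) ∈ □(d,c) the element δ·α⁻¹·β·γ⁻¹ lies in A, and the map Φ : □(d,c) → A × ◇(d,c) sending (δ, α, γ, β) to (δ·α⁻¹·β·γ⁻¹, (α, γ, β)) is a bijection, with inverse sending (a, (α, γ, β)) to (a·γ·β⁻¹·α, α, γ, β). -/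
/-! `Φ` and `Θ` are mutually inverse on all of `X⁴ = X × X³`, by free-group cancellation; the
diamond equations are needed only to see that the word lands in `ker d ∩ ker c` and that `Θ`
maps `A × ◇(d,c)` back into `□(d,c)`. -/

/-- The set of two-fold diamonds `(δ, α, γ, β)` for `d : X → D`, `c : X → C`. -/
def diamondSet {X C D : Type*} [Group X] [Group C] [Group D]
    (d : X →* D) (c : X →* C) : Set (X × X × X × X) :=
  {q | c q.1 = c q.2.1 ∧ c q.2.2.1 = c q.2.2.2 ∧
       d q.1 = d q.2.2.1 ∧ d q.2.1 = d q.2.2.2}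

/-- The set of open diamonds `(α, γ, β)` (diamonds with the `δ`-face missing). -/
def openDiamondSet {X C D : Type*} [Group X] [Group C] [Group D]
    (d : X →* D) (c : X →* C) : Set (X × X × X) :=
  {t | c t.2.1 = c t.2.2 ∧ d t.1 = d t.2.2}

/-- The word `δ·α⁻¹·β·γ⁻¹` of a diamond `(δ, α, γ, β)`. -/
def phiWord {X : Type*} [Group X] (q : X × X × X × X) : X :=
  q.1 * q.2.1⁻¹ * q.2.2.2 * q.2.2.1⁻¹

/-- The map `Φ : (δ, α, γ, β) ↦ (δ·α⁻¹·β·γ⁻¹, (α, γ, β))`. -/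
def phiMap {X : Type*} [Group X] (q : X × X × X × X) : X × (X × X × X) :=
  (phiWord q, q.2)

/-- The map `Θ : (a, (α, γ, β)) ↦ (a·γ·β⁻¹·α, α, γ, β)`. -/
def thetaMap {X : Type*} [Group X] (p : X × (X × X × X)) : X × X × X × X :=
  (p.1 * p.2.2.1 * p.2.2.2⁻¹ * p.2.1, p.2)

section Diamond

variable {X C D : Type*} [Group X] [Group C] [Group D] {d : X →* D} {c : X →* C}

theorem thetaMap_phiMap (q : X × X × X × X) : thetaMap (phiMap q) = q := by
  obtain ⟨δ, α, γ, β⟩ := q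
  simp only [thetaMap, phiMap, phiWord, Prod.mk.injEq, and_true]
  group

theorem phiMap_thetaMap (p : X × (X × X × X)) : phiMap (thetaMap p) = p := by
  obtain ⟨a, α, γ, β⟩ := p
  simp only [thetaMap, phiMap, phiWord, Prod.mk.injEq, and_true]
  group

theorem phiWord_mem_ker_inf {q : X × X × X × X} (hq : q ∈ diamondSet d c) :
    phiWord q ∈ d.ker ⊓ c.ker := by
  obtain ⟨δ, α, γ, β⟩ := q
  obtain ⟨hcδα, hcγβ, hdδγ, hdαβ⟩ := hq
  simp only [Subgroup.mem_inf, MonoidHom.mem_ker, phiWord, map_mul, map_inv]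
  exact ⟨by rw [hdδγ, hdαβ]; group, by rw [hcδα, hcγβ]; group⟩

theorem thetaMap_mem_diamondSet {p : X × (X × X × X)} (ha : p.1 ∈ d.ker ⊓ c.ker)
    (ht : p.2 ∈ openDiamondSet d c) : thetaMap p ∈ diamondSet d c := by
  obtain ⟨a, α, γ, β⟩ := p
  obtain ⟨hda, hca⟩ := Subgroup.mem_inf.mp ha
  obtain ⟨hcγβ, hdαβ⟩ := ht
  rw [MonoidHom.mem_ker] at hda hca
  refine ⟨?_, hcγβ, ?_, hdαβ⟩ <;> simp only [thetaMap, map_mul, map_inv, hda, hca, one_mul]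
  · rw [hcγβ, mul_inv_cancel, one_mul]
  · rw [hdαβ, mul_assoc, inv_mul_cancel, mul_one]

end Diamond

/-- For any `d : X → D`, `c : X → C` with `A = ker d ∩ ker c`, the word of any
diamond lies in `A`, and `Φ` is a bijection `□(d,c) → A × ◇(d,c)` with inverse `Θ`. -/
theorem diamond_bijection {X C D : Type*} [Group X] [Group C] [Group D]
    (d : X →* D) (c : X →* C) :
    (∀ q ∈ diamondSet d c, phiWord q ∈ d.ker ⊓ c.ker) ∧
    Set.BijOn phiMap (diamondSet d c)
      {p : X × (X × X × X) | p.1 ∈ d.ker ⊓ c.ker ∧ p.2 ∈ openDiamondSet d c} ∧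
    Set.InvOn thetaMap phiMap (diamondSet d c)
      {p : X × (X × X × X) | p.1 ∈ d.ker ⊓ c.ker ∧ p.2 ∈ openDiamondSet d c} := by
  have hinv : Set.InvOn thetaMap phiMap (diamondSet d c)
      {p : X × (X × X × X) | p.1 ∈ d.ker ⊓ c.ker ∧ p.2 ∈ openDiamondSet d c} :=
    ⟨fun q _ => thetaMap_phiMap q, fun p _ => phiMap_thetaMap p⟩
  refine ⟨fun q hq => phiWord_mem_ker_inf hq, hinv.bijOn ?_ ?_, hinv⟩
  · exact fun q hq => ⟨phiWord_mem_ker_inf hq, hq.2.1, hq.2.2.2⟩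
  · exact fun p hp => thetaMap_mem_diamondSet hp.1 hp.2
end

section
/- Let X, D, C be groups and d : X → D, c : X → C group homomorphisms; set A = ker d ∩ ker c. Assume that the commutator subgroup ⁅ker d, ker c⁆ is trivial and that every element of A commutes with every element of X. Then the map ι : ◇(d,c) → □(d,c) sending (α, γ, β) to (γ·β⁻¹·α, α, γ, β) is a group homomorphism, and π ∘ ι = id, where π : □(d,c) → ◇(d,c) is the homomorphism forgetting the first coordinate, π(δ, α, γ, β) = (α, γ, β). -/
/-- The splitting `ι : (α, γ, β) ↦ (γ·β⁻¹·α, α, γ, β)`. -/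
def iotaMap {X : Type*} [Group X] (t : X × X × X) : X × X × X × X :=
  (t.2.1 * t.2.2⁻¹ * t.1, t)

/-!
For `(α, γ, β) ∈ ◇(d,c)` the element `β⁻¹α` lies in `ker d` and `γβ⁻¹` lies in `ker c`.
Expanding `ι` of a product, the first coordinate `γ₁γ₂β₂⁻¹β₁⁻¹α₁α₂` differs from
`(γ₁β₁⁻¹α₁)(γ₂β₂⁻¹α₂)` only by swapping `γ₂β₂⁻¹ ∈ ker c` past `β₁⁻¹α₁ ∈ ker d`,
and these commute because `⁅ker d, ker c⁆ = 1`.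
-/

theorem Subgroup.commute_of_commutator_eq_bot {G : Type*} [Group G] {H K : Subgroup G}
    (hHK : ⁅H, K⁆ = ⊥) {x y : G} (hx : x ∈ H) (hy : y ∈ K) : Commute x y :=
  (Subgroup.mem_centralizer_iff.mp (commutator_eq_bot_iff_le_centralizer.mp hHK hx) y hy).symm

theorem mul_mul_inv_mul_mul_of_commute {G : Type*} [Group G] {α₁ β₁ γ₁ α₂ β₂ γ₂ : G}
    (h : Commute (β₁⁻¹ * α₁) (γ₂ * β₂⁻¹)) :
    γ₁ * γ₂ * (β₁ * β₂)⁻¹ * (α₁ * α₂) = γ₁ * β₁⁻¹ * α₁ * (γ₂ * β₂⁻¹ * α₂) :=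
  calc γ₁ * γ₂ * (β₁ * β₂)⁻¹ * (α₁ * α₂)
      = γ₁ * ((γ₂ * β₂⁻¹) * (β₁⁻¹ * α₁)) * α₂ := by group
    _ = γ₁ * ((β₁⁻¹ * α₁) * (γ₂ * β₂⁻¹)) * α₂ := by rw [h.eq]
    _ = γ₁ * β₁⁻¹ * α₁ * (γ₂ * β₂⁻¹ * α₂) := by group

section

variable {X C D : Type*} [Group X] [Group C] [Group D] {d : X →* D} {c : X →* C}

theorem inv_mul_mem_ker_of_mem_openDiamondSet {t : X × X × X} (ht : t ∈ openDiamondSet d c) :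
    t.2.2⁻¹ * t.1 ∈ d.ker := by
  simp [MonoidHom.mem_ker, ht.2]

theorem mul_inv_mem_ker_of_mem_openDiamondSet {t : X × X × X} (ht : t ∈ openDiamondSet d c) :
    t.2.1 * t.2.2⁻¹ ∈ c.ker := by
  simp [MonoidHom.mem_ker, ht.1]

theorem iotaMap_mem_diamondSet {t : X × X × X} (ht : t ∈ openDiamondSet d c) :
    iotaMap t ∈ diamondSet d c := by
  obtain ⟨α, γ, β⟩ := t
  obtain ⟨hc, hd⟩ := ht
  exact ⟨by simp [iotaMap, hc], hc, by simp [iotaMap, hd], hd⟩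

theorem iotaMap_mul (h : ⁅d.ker, c.ker⁆ = (⊥ : Subgroup X)) {t u : X × X × X}
    (ht : t ∈ openDiamondSet d c) (hu : u ∈ openDiamondSet d c) :
    iotaMap (t * u) = iotaMap t * iotaMap u := by
  have key := Subgroup.commute_of_commutator_eq_bot h
    (inv_mul_mem_ker_of_mem_openDiamondSet ht) (mul_inv_mem_ker_of_mem_openDiamondSet hu)
  ext
  · exact mul_mul_inv_mul_mul_of_commute key
  all_goals rfl

end

theorem diamond_splitting_general {X C D : Type*} [Group X] [Group C] [Group D]
    (d : X →* D) (c : X →* C)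
    (h1 : ⁅d.ker, c.ker⁆ = (⊥ : Subgroup X)) :
    (∀ t ∈ openDiamondSet d c, iotaMap t ∈ diamondSet d c) ∧
    (∀ t ∈ openDiamondSet d c, ∀ u ∈ openDiamondSet d c,
      iotaMap (t * u) = iotaMap t * iotaMap u) ∧
    (∀ t ∈ openDiamondSet d c, (iotaMap t).2 = t) :=
  ⟨fun _ ht => iotaMap_mem_diamondSet ht,
    fun _ ht _ hu => iotaMap_mul h1 ht hu,
    fun _ _ => rfl⟩

/-- If `⁅ker d, ker c⁆ = 1` and `⁅A, X⁆ = 1` (where `A = ker d ∩ ker c`), the map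
`ι : ◇(d,c) → □(d,c), (α,γ,β) ↦ (γ·β⁻¹·α, α, γ, β)` is a group homomorphism
splitting the projection `π` which forgets the first coordinate. -/
theorem diamond_splitting {X C D : Type*} [Group X] [Group C] [Group D]
    (d : X →* D) (c : X →* C)
    (h1 : ⁅d.ker, c.ker⁆ = (⊥ : Subgroup X))
    (h2 : ∀ a ∈ d.ker ⊓ c.ker, ∀ x : X, a * x = x * a) :
    (∀ t ∈ openDiamondSet d c, iotaMap t ∈ diamondSet d c) ∧
    (∀ t ∈ openDiamondSet d c, ∀ u ∈ openDiamondSet d c,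
      iotaMap (t * u) = iotaMap t * iotaMap u) ∧
    (∀ t ∈ openDiamondSet d c, (iotaMap t).2 = t) :=
  diamond_splitting_general d c h1
end

section
/- Let n ≥ 1, let X be a group, and for each i ∈ Fin n let f_i : X → Y_i be a group homomorphism; set A = ⋂_{i ∈ Fin n} ker f_i. Let ⬜ be the diamond group: the subgroup of the product ∏_{J ⊆ Fin n} X consisting of all families m = (m_J)_{J ⊆ Fin n} such that f_i(m_J) = f_i(m_{J ∪ {i}}) for every i ∈ Fin n and every J ⊆ Fin n with i ∉ J. For a fixed I ⊆ Fin n, let ◇^I be the punctured diamond group: the subgroup of ∏_{J ⊆ Fin n, J ≠ I} X consisting of all families (m_J)_{J ≠ I} satisfying the same conditions whenever both J ≠ I and J ∪ {i} ≠ I, and let π^I : ⬜ → ◇^I be the homomorphism that forgets the entry at I. Then π^I is surjective, and its kernel is the subgroup {m ∈ ⬜ | m_J = 1 for all J ≠ I}, which is isomorphic to A via m ↦ m_I. -/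
/-- The set of `n`-fold diamonds for homomorphisms `f i : X → Y i`: families
`m : Set (Fin n) → X` with `f i (m J) = f i (m (insert i J))` whenever `i ∉ J`. -/
def diamondGrpSet {n : ℕ} {X : Type*} [Group X] {Y : Fin n → Type*}
    [∀ i, Group (Y i)] (f : ∀ i, X →* Y i) : Set (Set (Fin n) → X) :=
  {m | ∀ (i : Fin n) (J : Set (Fin n)), i ∉ J → f i (m J) = f i (m (insert i J))}

/-- The set of punctured `n`-fold diamonds (the entry at `I` is missing). -/
def puncturedGrpSet {n : ℕ} {X : Type*} [Group X] {Y : Fin n → Type*}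
    [∀ i, Group (Y i)] (f : ∀ i, X →* Y i) (I : Set (Fin n)) :
    Set ({J : Set (Fin n) // J ≠ I} → X) :=
  {m | ∀ (i : Fin n) (J : Set (Fin n)) (hi : i ∉ J) (hJ : J ≠ I)
      (hJ' : insert i J ≠ I),
    f i (m ⟨J, hJ⟩) = f i (m ⟨insert i J, hJ'⟩)}

/-- The projection `π^I` forgetting the entry at `I`. -/
def forgetEntry {n : ℕ} {X : Type*} (I : Set (Fin n)) (m : Set (Fin n) → X) :
    {J : Set (Fin n) // J ≠ I} → X :=
  fun J => m J.1

/-! The only substantial point is that a punctured diamond can be completed at `I`.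
Groups are Mal'tsev, with Mal'tsev operation `p x y z = x * y⁻¹ * z`, which every
homomorphism preserves. Fill the cube one direction `d` at a time: the missing entry
is `p u v (m (I ∆ {d}))`, where `u` fills the face through `I` and `v` is the same
filler of the opposite (complete) face, evaluated at `I ∆ {d}`. In direction `d` the
two faces are related by `f d`, so `f d u = f d v` and `f d` of the entry is
`f d (m (I ∆ {d}))`; in any other direction `i` the factors `v⁻¹ * m (I ∆ {d})` cancel
under `f i`. The kernel is then immediate: a diamond trivial away from `I` has
`f i (m I) = f i (m (I ∆ {i})) = 1`, and conversely any `a ∈ A` placed at `I`,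
with `1` elsewhere, is a diamond. -/

open scoped symmDiff

namespace Set

variable {ι : Type*}

theorem symmDiff_singleton_of_notMem {i : ι} {J : Set ι} (hi : i ∉ J) :
    J ∆ {i} = insert i J := by
  rw [Disjoint.symmDiff_eq_sup (disjoint_singleton_right.mpr hi)]
  exact union_singleton

theorem symmDiff_singleton_eq_insert_or (i : ι) (J : Set ι) :
    (i ∉ J ∧ J ∆ {i} = insert i J) ∨ (i ∉ J ∆ {i} ∧ J = insert i (J ∆ {i})) := by
  by_cases hi : i ∈ J
  · right
    rw [symmDiff_of_ge (singleton_subset_iff.mpr hi), insert_sdiff_singleton,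
      insert_eq_of_mem hi]
    exact ⟨fun h => h.2 rfl, rfl⟩
  · exact Or.inl ⟨hi, symmDiff_singleton_of_notMem hi⟩

theorem symmDiff_singleton_ne_self (J : Set ι) (i : ι) : J ∆ {i} ≠ J :=
  fun h => singleton_ne_empty i (symmDiff_eq_left.mp h)

theorem symmDiff_ne_of_mem_of_notMem {J K I₀ : Set ι} {a : ι} (haK : a ∈ K)
    (ha : a ∉ J ∆ I₀) : J ∆ K ≠ I₀ := by
  rintro rfl
  rw [symmDiff_symmDiff_cancel_left] at ha
  exact ha haK

theorem symmDiff_singleton_ne {J I₀ : Set ι} {d : ι} (hd : d ∉ J ∆ I₀) :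
    J ∆ {d} ≠ I₀ :=
  symmDiff_ne_of_mem_of_notMem rfl hd

theorem symmDiff_singleton_symmDiff_singleton_ne {J I₀ : Set ι} {d i : ι}
    (hd : d ∉ J ∆ I₀) (hdi : d ≠ i) : J ∆ {d} ∆ {i} ≠ I₀ := by
  rw [symmDiff_assoc]
  exact symmDiff_ne_of_mem_of_notMem (mem_symmDiff.mpr (Or.inl ⟨rfl, hdi⟩)) hd

theorem notMem_symmDiff_symmDiff_singleton {J I₀ : Set ι} {d d' : ι} (hd' : d' ∉ J ∆ I₀)
    (hne : d' ≠ d) : d' ∉ J ∆ {d} ∆ I₀ := by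
  rw [symmDiff_right_comm, mem_symmDiff]
  rintro (⟨h, -⟩ | ⟨h, -⟩)
  · exact hd' h
  · exact hne h

end Set

open Set

section CubeFiller

variable {ι X : Type*} [Group X] {Y : ι → Type*} [∀ i, Group (Y i)]

/-- A punctured diamond, with an arbitrary value filled in at the missing vertex `I₀`. -/
def IsDiamondOff (f : ∀ i, X →* Y i) (I₀ : Set ι) (M : Set ι → X) : Prop :=
  ∀ (i : ι) (J : Set ι), J ≠ I₀ → J ∆ {i} ≠ I₀ → f i (M J) = f i (M (J ∆ {i}))

def cubeFiller (M : Set ι → X) : List ι → Set ι → X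
  | [], _ => 1
  | d :: ds, J => cubeFiller M ds J * (cubeFiller M ds (J ∆ {d}))⁻¹ * M (J ∆ {d})

variable {f : ∀ i, X →* Y i} {I₀ : Set ι} {M : Set ι → X}

theorem IsDiamondOff.map_symmDiff_symmDiff (hM : IsDiamondOff f I₀ M) {J : Set ι}
    {d i : ι} (hd : d ∉ J ∆ I₀) (hdi : d ≠ i) :
    f i (M (J ∆ {d} ∆ {i})) = f i (M (J ∆ {d})) :=
  (hM i _ (symmDiff_singleton_ne hd) (symmDiff_singleton_symmDiff_singleton_ne hd hdi)).symm

theorem IsDiamondOff.map_cubeFiller_symmDiff (hM : IsDiamondOff f I₀ M) {ds : List ι}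
    (hds : ds.Nodup) {J : Set ι} (hJ : ∀ d ∈ ds, d ∉ J ∆ I₀) {i : ι} (hi : i ∉ ds) :
    f i (cubeFiller M ds (J ∆ {i})) = f i (cubeFiller M ds J) := by
  induction ds generalizing J with
  | nil => rfl
  | cons d ds ih =>
    obtain ⟨hd_ds, hnd⟩ := List.nodup_cons.mp hds
    obtain ⟨hid, hi⟩ := not_or.mp (List.mem_cons.not.mp hi)
    have hJ' : ∀ d' ∈ ds, d' ∉ J ∆ I₀ := fun d' h => hJ d' (List.mem_cons_of_mem d h)
    have hJd : ∀ d' ∈ ds, d' ∉ J ∆ {d} ∆ I₀ := fun d' h =>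
      notMem_symmDiff_symmDiff_singleton (hJ' d' h) (ne_of_mem_of_not_mem h hd_ds)
    have hd := hJ d List.mem_cons_self
    simp only [cubeFiller, map_mul, map_inv, symmDiff_right_comm J {i} {d}, ih hnd hJ' hi,
      ih hnd hJd hi, hM.map_symmDiff_symmDiff hd (Ne.symm hid)]

theorem IsDiamondOff.map_cubeFiller (hM : IsDiamondOff f I₀ M) {ds : List ι}
    (hds : ds.Nodup) {J : Set ι} (hJ : ∀ d ∈ ds, d ∉ J ∆ I₀) {i : ι} (hi : i ∈ ds) :
    f i (cubeFiller M ds J) = f i (M (J ∆ {i})) := by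
  induction ds generalizing J with
  | nil => cases hi
  | cons d ds ih =>
    obtain ⟨hd_ds, hnd⟩ := List.nodup_cons.mp hds
    have hJ' : ∀ d' ∈ ds, d' ∉ J ∆ I₀ := fun d' h => hJ d' (List.mem_cons_of_mem d h)
    have hd := hJ d List.mem_cons_self
    simp only [cubeFiller, map_mul, map_inv]
    rcases List.mem_cons.mp hi with rfl | hi
    · rw [hM.map_cubeFiller_symmDiff hnd hJ' hd_ds, mul_inv_cancel, one_mul]
    · have hJd : ∀ d' ∈ ds, d' ∉ J ∆ {d} ∆ I₀ := fun d' h =>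
        notMem_symmDiff_symmDiff_singleton (hJ' d' h) (ne_of_mem_of_not_mem h hd_ds)
      rw [ih hnd hJ' hi, ih hnd hJd hi,
        hM.map_symmDiff_symmDiff hd (ne_of_mem_of_not_mem hi hd_ds).symm, inv_mul_cancel_right]

theorem IsDiamondOff.exists_fill [Finite ι] (hM : IsDiamondOff f I₀ M) :
    ∃ x : X, ∀ i, f i x = f i (M (I₀ ∆ {i})) := by
  have := Fintype.ofFinite ι
  refine ⟨cubeFiller M Finset.univ.toList I₀, fun i => hM.map_cubeFiller
    (Finset.nodup_toList _) (fun d _ => ?_) (Finset.mem_toList.mpr (Finset.mem_univ i))⟩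
  rw [symmDiff_self]
  exact notMem_empty d

end CubeFiller

section Diamonds

variable {n : ℕ} {X : Type*} [Group X] {Y : Fin n → Type*} [∀ i, Group (Y i)]
  {f : ∀ i, X →* Y i} {I : Set (Fin n)}

theorem mem_diamondGrpSet_iff {m : Set (Fin n) → X} :
    m ∈ diamondGrpSet f ↔ ∀ i J, f i (m J) = f i (m (J ∆ {i})) := by
  refine ⟨fun hm i J => ?_, fun hm i J hi => ?_⟩
  · rcases symmDiff_singleton_eq_insert_or i J with ⟨hi, hJi⟩ | ⟨hi, hJ⟩
    · rw [hJi]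
      exact hm i J hi
    · conv_lhs => rw [hJ]
      exact (hm i _ hi).symm
  · rw [hm i J, symmDiff_singleton_of_notMem hi]

theorem forgetEntry_mem_puncturedGrpSet {m : Set (Fin n) → X} (hm : m ∈ diamondGrpSet f) :
    forgetEntry I m ∈ puncturedGrpSet f I :=
  fun i J hi _ _ => hm i J hi

theorem isDiamondOff_of_forgetEntry_mem {M : Set (Fin n) → X}
    (hM : forgetEntry I M ∈ puncturedGrpSet f I) : IsDiamondOff f I M := by
  intro i J hJ hJi
  rcases symmDiff_singleton_eq_insert_or i J with ⟨hi, hJi'⟩ | ⟨hi, hJ'⟩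
  · rw [hJi'] at hJi ⊢
    exact hM i J hi hJ hJi
  · rw [hJ'] at hJ
    conv_lhs => rw [hJ']
    exact (hM i _ hi hJi hJ).symm

theorem update_mem_diamondGrpSet [DecidableEq (Set (Fin n))] {M : Set (Fin n) → X} {x : X}
    (hM : IsDiamondOff f I M) (hx : ∀ i, f i x = f i (M (I ∆ {i}))) :
    Function.update M I x ∈ diamondGrpSet f := by
  refine mem_diamondGrpSet_iff.mpr fun i J => ?_
  have hI : I ∆ {i} ≠ I := symmDiff_singleton_ne_self I i
  by_cases hJ : J = I
  · subst hJ
    rw [Function.update_self, Function.update_of_ne hI, hx]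
  by_cases hJi : J ∆ {i} = I
  · have hIJ : I ∆ {i} = J := by rw [← hJi, symmDiff_symmDiff_cancel_right]
    rw [hJi, Function.update_self, Function.update_of_ne hJ, hx, hIJ]
  rw [Function.update_of_ne hJ, Function.update_of_ne hJi]
  exact hM i J hJ hJi

theorem surjOn_forgetEntry :
    SurjOn (forgetEntry I) (diamondGrpSet f) (puncturedGrpSet f I) := by
  classical
  intro m hm
  set M : Set (Fin n) → X := fun J => if h : J = I then 1 else m ⟨J, h⟩
  have hMm : forgetEntry I M = m := funext fun J => dif_neg J.2
  have hM : IsDiamondOff f I M := isDiamondOff_of_forgetEntry_mem (hMm ▸ hm)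
  obtain ⟨x, hx⟩ := hM.exists_fill
  refine ⟨Function.update M I x, update_mem_diamondGrpSet hM hx, ?_⟩
  rw [← hMm]
  ext J
  exact Function.update_of_ne J.2 x M

theorem forgetEntry_eq_one_iff {m : Set (Fin n) → X} :
    forgetEntry I m = 1 ↔ ∀ J, J ≠ I → m J = 1 := by
  simp [funext_iff, forgetEntry]

theorem mem_iInf_ker_of_eq_one_of_ne {m : Set (Fin n) → X} (hm : m ∈ diamondGrpSet f)
    (h1 : ∀ J, J ≠ I → m J = 1) : m I ∈ ⨅ i, (f i).ker := by
  refine Subgroup.mem_iInf.mpr fun i => ?_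
  rw [MonoidHom.mem_ker, mem_diamondGrpSet_iff.mp hm i I,
    h1 _ (symmDiff_singleton_ne_self I i), map_one]

theorem bijOn_eval_kernel :
    BijOn (fun m : Set (Fin n) → X => m I)
      {m | m ∈ diamondGrpSet f ∧ ∀ J : Set (Fin n), J ≠ I → m J = 1}
      ((⨅ i, (f i).ker : Subgroup X) : Set X) := by
  classical
  refine ⟨fun m ⟨hm, h1⟩ => mem_iInf_ker_of_eq_one_of_ne hm h1, ?_, fun a ha => ?_⟩
  · rintro m ⟨-, hm⟩ m' ⟨-, hm'⟩ (h : m I = m' I)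
    funext J
    by_cases hJ : J = I
    · rwa [hJ]
    · rw [hm J hJ, hm' J hJ]
  · have hker : ∀ i, f i a = 1 := fun i => Subgroup.mem_iInf.mp ha i
    refine ⟨Pi.mulSingle I a, ⟨?_, fun J hJ => Pi.mulSingle_eq_of_ne (M := fun _ => X) hJ a⟩,
      Pi.mulSingle_eq_same (M := fun _ => X) I a⟩
    exact update_mem_diamondGrpSet (fun _ _ _ _ => rfl) (by simp [hker])

end Diamonds

theorem diamond_projection_kernel_general {n : ℕ} {X : Type*} [Group X]
    {Y : Fin n → Type*} [∀ i, Group (Y i)] (f : ∀ i, X →* Y i)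
    (I : Set (Fin n)) :
    Set.MapsTo (forgetEntry I) (diamondGrpSet f) (puncturedGrpSet f I) ∧
    Set.SurjOn (forgetEntry I) (diamondGrpSet f) (puncturedGrpSet f I) ∧
    (∀ m ∈ diamondGrpSet f,
      (forgetEntry I m = 1 ↔ ∀ J : Set (Fin n), J ≠ I → m J = 1)) ∧
    Set.BijOn (fun m : Set (Fin n) → X => m I)
      {m | m ∈ diamondGrpSet f ∧ ∀ J : Set (Fin n), J ≠ I → m J = 1}
      ((⨅ i, (f i).ker : Subgroup X) : Set X) :=
  ⟨fun _ => forgetEntry_mem_puncturedGrpSet, surjOn_forgetEntry,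
    fun _ _ => forgetEntry_eq_one_iff, bijOn_eval_kernel⟩

/-- `π^I : ⬜ → ◇^I` is surjective, its kernel consists of the diamonds which are
trivial away from `I`, and this kernel is isomorphic to `A = ⋂ ker (f i)`
via `m ↦ m I`. -/
theorem diamond_projection_kernel {n : ℕ} (hn : 1 ≤ n) {X : Type*} [Group X]
    {Y : Fin n → Type*} [∀ i, Group (Y i)] (f : ∀ i, X →* Y i)
    (I : Set (Fin n)) :
    Set.MapsTo (forgetEntry I) (diamondGrpSet f) (puncturedGrpSet f I) ∧
    Set.SurjOn (forgetEntry I) (diamondGrpSet f) (puncturedGrpSet f I) ∧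
    (∀ m ∈ diamondGrpSet f,
      (forgetEntry I m = 1 ↔ ∀ J : Set (Fin n), J ≠ I → m J = 1)) ∧
    Set.BijOn (fun m : Set (Fin n) → X => m I)
      {m | m ∈ diamondGrpSet f ∧ ∀ J : Set (Fin n), J ≠ I → m J = 1}
      ((⨅ i, (f i).ker : Subgroup X) : Set X) :=
  diamond_projection_kernel_general f I
end
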